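/- Let V be a finite-dimensional complex vector space with nondegenerate Hermitian form ℓ and A : V → V anti-linear, ℓ-self-adjoint, with A³ = 0 and A ≠ 0. Then there exists a basis of V, positive integers k₁, …, k_s ∈ {1, 2, 3} with at least one k_m > 1, and signs ε₁, …, ε_s ∈ {-1, 1}, such that in this basis A is represented by the block-diagonal anti-linear matrix J_{k₁} ⊕ ⋯ ⊕ J_{k_s} (nilpotent Jordan blocks composed with coordinate conjugation) and ℓ is represented by ε₁ P_{k₁} ⊕ ⋯ ⊕ ε_s P_{k_s}, where P_k is the k×k anti-diagonal permutation matrix. -/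

import Mathlib

open Module Submodule ComplexConjugate

universe u

variable {V : Type u} [AddCommGroup V] [Module ℂ V]

structure GP (ℓ : V → V → ℂ) (A : V → V) : Prop where
  ladd : ∀ x₁ x₂ y : V, ℓ (x₁ + x₂) y = ℓ x₁ y + ℓ x₂ y
  lsmul : ∀ (c : ℂ) (x y : V), ℓ (c • x) y = c * ℓ x y
  lherm : ∀ x y : V, ℓ y x = conj (ℓ x y)
  lnd : ∀ x : V, (∀ y : V, ℓ x y = 0) → x = 0
  aadd : ∀ x y : V, A (x + y) = A x + A y
  asmul : ∀ (c : ℂ) (x : V), A (c • x) = conj c • A x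
  asa : ∀ x y : V, ℓ (A x) y = ℓ (A y) x
  a3 : ∀ v : V, A (A (A v)) = 0

namespace GP

variable {ℓ : V → V → ℂ} {A : V → V} (h : GP ℓ A)
include h

lemma l0l (y : V) : ℓ 0 y = 0 := by
  have h0 := h.ladd 0 0 y
  rw [add_zero] at h0
  exact left_eq_add.mp h0

lemma l0r (x : V) : ℓ x 0 = 0 := by
  rw [h.lherm 0 x, h.l0l, map_zero]

lemma laddr (x y₁ y₂ : V) : ℓ x (y₁ + y₂) = ℓ x y₁ + ℓ x y₂ := by
  rw [h.lherm (y₁ + y₂) x, h.ladd, map_add, ← h.lherm, ← h.lherm]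

lemma lsmulr (c : ℂ) (x y : V) : ℓ x (c • y) = conj c * ℓ x y := by
  rw [h.lherm (c • y) x, h.lsmul, map_mul, ← h.lherm]

lemma a0 : A 0 = 0 := by
  have h0 := h.aadd 0 0
  rw [add_zero] at h0
  exact left_eq_add.mp h0

lemma lsum_smul_left {ι : Type*} (sf : Finset ι) (g : ι → ℂ) (v : ι → V) (y : V) :
    ℓ (∑ i ∈ sf, g i • v i) y = ∑ i ∈ sf, g i * ℓ (v i) y := by
  classical
  induction sf using Finset.cons_induction with
  | empty => simp [h.l0l]
  | cons a s ha ih => rw [Finset.sum_cons, Finset.sum_cons, h.ladd, h.lsmul, ih]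

lemma lsum_smul_right {ι : Type*} (sf : Finset ι) (g : ι → ℂ) (v : ι → V) (y : V) :
    ℓ y (∑ i ∈ sf, g i • v i) = ∑ i ∈ sf, conj (g i) * ℓ y (v i) := by
  classical
  induction sf using Finset.cons_induction with
  | empty => simp [h.l0r]
  | cons a s ha ih => rw [Finset.sum_cons, Finset.sum_cons, h.laddr, h.lsmulr, ih]

lemma asum {ι : Type*} (sf : Finset ι) (v : ι → V) :
    A (∑ i ∈ sf, v i) = ∑ i ∈ sf, A (v i) := by
  classical
  induction sf using Finset.cons_induction with
  | empty => simp [h.a0]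
  | cons a s ha ih => rw [Finset.sum_cons, Finset.sum_cons, h.aadd, ih]

end GP

/-- The conclusion of the inductive normal-form lemma. -/
def Concl (ℓ : V → V → ℂ) (A : V → V) : Prop :=
  ∃ (s : ℕ) (k : Fin s → ℕ) (_ : ∀ m, 0 < k m) (ε : Fin s → ℂ)
    (f : ((m : Fin s) × Fin (k m)) → V),
    (∀ m, k m = 1 ∨ k m = 2 ∨ k m = 3) ∧
    (∀ m, ε m = 1 ∨ ε m = -1) ∧
    (∀ (m : Fin s) (h0 : 0 < k m), A (f ⟨m, ⟨0, h0⟩⟩) = 0) ∧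
    (∀ (m : Fin s) (i : ℕ) (hi : i < k m) (hi1 : i + 1 < k m),
      A (f ⟨m, ⟨i + 1, hi1⟩⟩) = f ⟨m, ⟨i, hi⟩⟩) ∧
    (∀ x y : (m : Fin s) × Fin (k m),
      ℓ (f x) (f y) = if x.1 = y.1 ∧ (x.2 : ℕ) + (y.2 : ℕ) + 1 = k x.1 then ε x.1 else 0) ∧
    Submodule.span ℂ (Set.range f) = ⊤

namespace GP
variable {ℓ : V → V → ℂ} {A : V → V} (h : GP ℓ A)
include h

lemma gram_li {s : ℕ} {k : Fin s → ℕ} (ε : Fin s → ℂ)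
    (hε : ∀ m, ε m = 1 ∨ ε m = -1) (f : ((m : Fin s) × Fin (k m)) → V)
    (hg : ∀ x y : (m : Fin s) × Fin (k m),
      ℓ (f x) (f y) = if x.1 = y.1 ∧ (x.2 : ℕ) + (y.2 : ℕ) + 1 = k x.1 then ε x.1 else 0) :
    LinearIndependent ℂ f := by
  classical
  rw [linearIndependent_iff']
  intro sf g hsum j hj
  obtain ⟨mj, ij⟩ := j
  have hj2 : (ij : ℕ) < k mj := ij.2
  have h0 : ℓ (∑ i ∈ sf, g i • f i) (f ⟨mj, ⟨k mj - 1 - (ij : ℕ), by omega⟩⟩) = 0 := by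
    rw [hsum]; exact h.l0l _
  rw [h.lsum_smul_left] at h0
  have hterm : ∀ i ∈ sf, g i * ℓ (f i) (f ⟨mj, ⟨k mj - 1 - (ij : ℕ), by omega⟩⟩) =
      if i = ⟨mj, ij⟩ then g i * ε mj else 0 := by
    intro i _
    rw [hg]
    obtain ⟨mi, ii⟩ := i
    by_cases h1 : mi = mj
    · subst h1
      by_cases h2 : ii = ij
      · subst h2
        rw [if_pos ⟨rfl, show (ii : ℕ) + (k mi - 1 - (ii : ℕ)) + 1 = k mi by omega⟩,
          if_pos rfl]
      · rw [if_neg, if_neg, mul_zero]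
        · simp only [Sigma.mk.inj_iff, heq_eq_eq]
          rintro ⟨-, h3⟩; exact h2 h3
        · rintro ⟨-, h3⟩
          have h4 : (ii : ℕ) + (k mi - 1 - (ij : ℕ)) + 1 = k mi := h3
          have h5 : (ii : ℕ) < k mi := ii.2
          exact h2 (Fin.ext (by omega))
    · rw [if_neg, if_neg, mul_zero]
      · simp only [Sigma.mk.inj_iff]
        rintro ⟨h3, -⟩; exact h1 h3
      · rintro ⟨h3, -⟩; exact h1 h3
  rw [Finset.sum_congr rfl hterm, Finset.sum_ite_eq' sf ⟨mj, ij⟩, if_pos hj] at h0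
  rcases hε mj with he | he <;> rw [he] at h0 <;> simpa using h0

end GP

namespace GP
variable {ℓ : V → V → ℂ} {A : V → V} (h : GP ℓ A)
include h

lemma step [FiniteDimensional ℂ V] {n : ℕ}
    (IH : ∀ (W : Submodule ℂ V) (ℓ' : W → W → ℂ) (A' : W → W),
      GP ℓ' A' → finrank ℂ W ≤ n → Concl ℓ' A')
    (hn : finrank ℂ V ≤ n + 1)
    (t : ℕ) (ht : t = 1 ∨ t = 2 ∨ t = 3)
    (e : Fin t → V) (ε₀ : ℂ) (hε₀ : ε₀ = 1 ∨ ε₀ = -1)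
    (hc0 : ∀ h0 : 0 < t, A (e ⟨0, h0⟩) = 0)
    (hcs : ∀ (i : ℕ) (hi : i < t) (hi1 : i + 1 < t), A (e ⟨i + 1, hi1⟩) = e ⟨i, hi⟩)
    (hg : ∀ i j : Fin t, ℓ (e i) (e j) = if (i : ℕ) + (j : ℕ) + 1 = t then ε₀ else 0) :
    Concl ℓ A := by
  classical
  have ht0 : 0 < t := by omega
  have hε₀sq : ε₀ * ε₀ = 1 := by rcases hε₀ with h' | h' <;> rw [h'] <;> ring
  have hε₀ne : ε₀ ≠ 0 := by rcases hε₀ with h' | h' <;> rw [h'] <;> norm_num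
  -- the orthogonal complement of the block
  set W : Submodule ℂ V :=
    { carrier := {w | ∀ i : Fin t, ℓ (e i) w = 0}
      add_mem' := fun ha hb i => by rw [h.laddr, ha i, hb i, add_zero]
      zero_mem' := fun i => h.l0r _
      smul_mem' := fun c x hx i => by rw [h.lsmulr, hx i, mul_zero] } with hW
  have hWmem : ∀ w : V, w ∈ W ↔ ∀ i : Fin t, ℓ (e i) w = 0 := fun w => Iff.rfl
  -- A preserves W
  have hAW : ∀ w ∈ W, A w ∈ W := by
    intro w hw i
    have : ℓ (A (e i)) w = 0 := by
      rcases Nat.eq_zero_or_pos (i : ℕ) with h0 | hpos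
      · have : i = ⟨0, ht0⟩ := Fin.ext h0
        rw [this, hc0 ht0, h.l0l]
      · have hi1 : (i : ℕ) - 1 < t := by omega
        have hi2 : (i : ℕ) - 1 + 1 < t := by have := i.2; omega
        have : i = ⟨(i : ℕ) - 1 + 1, hi2⟩ := Fin.ext (show (i : ℕ) = (i : ℕ) - 1 + 1 by omega)
        rw [this, hcs _ hi1 hi2, hw ⟨(i : ℕ) - 1, hi1⟩]
    rw [h.lherm, ← h.asa, this, map_zero]
  -- restricted data
  set A' : W → W := fun w => ⟨A w, hAW w w.2⟩ with hA'
  set ℓ' : W → W → ℂ := fun w w' => ℓ w w' with hℓ'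
  -- the projection onto the block
  set rev : Fin t → Fin t := fun i => ⟨t - 1 - (i : ℕ), by omega⟩ with hrev
  set pr : V → V := fun y => ∑ i : Fin t, (conj (ε₀ * ℓ (e (rev i)) y)) • e i with hpr
  have hproj : ∀ y : V, y - pr y ∈ W := by
    intro y j
    have h1 : ℓ (e j) (pr y) = ℓ (e j) y := by
      rw [hpr]
      simp only
      rw [h.lsum_smul_right]
      have hterm : ∀ i ∈ Finset.univ, conj (conj (ε₀ * ℓ (e (rev i)) y)) * ℓ (e j) (e i) =
          if i = rev j then ε₀ * ε₀ * ℓ (e (rev i)) y else 0 := by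
        intro i _
        rw [RingHomInvPair.comp_apply_eq₂, hg]
        by_cases hij : i = rev j
        · subst hij
          rw [if_pos, if_pos rfl]; · ring
          show (j : ℕ) + (t - 1 - (j : ℕ)) + 1 = t
          have := j.2; omega
        · rw [if_neg, if_neg hij, mul_zero]
          intro hc
          apply hij
          have hi2 := i.2
          exact Fin.ext (show (i : ℕ) = t - 1 - (j : ℕ) by omega)
      rw [Finset.sum_congr rfl hterm, Finset.sum_ite_eq' Finset.univ (rev j),
        if_pos (Finset.mem_univ _)]
      have : rev (rev j) = j := Fin.ext (by have := j.2; simp only [hrev]; omega)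
      rw [this, hε₀sq, one_mul]
    have h2 : ℓ (e j) (y - pr y) = ℓ (e j) y - ℓ (e j) (pr y) := by
      have := h.laddr (e j) (y - pr y) (pr y)
      rw [sub_add_cancel] at this
      rw [this]; ring
    rw [h2, h1, sub_self]
  -- restricted structure
  have h' : GP ℓ' A' := by
    constructor
    · intro x₁ x₂ y; exact h.ladd x₁ x₂ y
    · intro c x y; exact h.lsmul c x y
    · intro x y; exact h.lherm x y
    · intro x hx
      apply Subtype.ext
      apply h.lnd
      intro y
      have hy : (y : V) = pr y + (y - pr y) := by abel
      have hxW : ∀ i, ℓ (x : V) (e i) = 0 := by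
        intro i
        rw [h.lherm, x.2 i, map_zero]
      have hx1 : ℓ (x : V) (pr y) = 0 := by
        rw [hpr]
        simp only
        rw [h.lsum_smul_right]
        apply Finset.sum_eq_zero
        intro i _
        rw [hxW i, mul_zero]
      have hx2 : ℓ (x : V) (y - pr y) = 0 := hx ⟨y - pr y, hproj y⟩
      calc ℓ (x : V) y = ℓ (x : V) (pr y + (y - pr y)) := by rw [← hy]
        _ = ℓ (x : V) (pr y) + ℓ (x : V) (y - pr y) := h.laddr _ _ _
        _ = 0 := by rw [hx1, hx2, add_zero]
    · intro x y; exact Subtype.ext (h.aadd x y)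
    · intro c x; exact Subtype.ext (h.asmul c x)
    · intro x y; exact h.asa x y
    · intro v; exact Subtype.ext (h.a3 v)
  -- dimension drop
  have hWlt : finrank ℂ W ≤ n := by
    have hne : W ≠ ⊤ := by
      intro hWtop
      have hmem : e ⟨t - 1, by omega⟩ ∈ W := hWtop ▸ Submodule.mem_top
      have := hmem ⟨0, ht0⟩
      rw [hg, if_pos (show ((⟨0, ht0⟩ : Fin t) : ℕ) + ((⟨t - 1, by omega⟩ : Fin t) : ℕ) + 1 = t by show 0 + (t - 1) + 1 = t; omega)] at this
      exact hε₀ne this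
    have := Submodule.finrank_lt (V := V) hne
    omega
  obtain ⟨s', k', hpos', ε', f', hk', hε', hA0', hAc', hg', hsp'⟩ := IH W ℓ' A' h' hWlt
  -- assemble
  refine ⟨s' + 1, Fin.cons (α := fun _ => ℕ) t k', Fin.cases ht0 hpos',
    Fin.cons (α := fun _ => ℂ) ε₀ ε',
    fun x => Fin.cases (motive := fun m => Fin (Fin.cons (α := fun _ => ℕ) t k' m) → V)
      e (fun m' i => ((f' ⟨m', i⟩ : W) : V)) x.1 x.2,
    Fin.cases ht hk', Fin.cases hε₀ hε', ?_, ?_, ?_, ?_⟩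
  · -- A kills bottom of each chain
    intro m h0
    induction m using Fin.cases with
    | zero => exact hc0 h0
    | succ m' =>
      show A ((f' ⟨m', ⟨0, h0⟩⟩ : W) : V) = 0
      have := hA0' m' h0
      rw [show A ((f' ⟨m', ⟨0, h0⟩⟩ : W) : V) = ((A' (f' ⟨m', ⟨0, h0⟩⟩) : W) : V) from rfl,
        this, ZeroMemClass.coe_zero]
  · -- chain condition
    intro m i hi hi1
    induction m using Fin.cases with
    | zero => exact hcs i hi hi1
    | succ m' =>
      show A ((f' ⟨m', ⟨i + 1, hi1⟩⟩ : W) : V) = ((f' ⟨m', ⟨i, hi⟩⟩ : W) : V)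
      rw [show A ((f' ⟨m', ⟨i + 1, hi1⟩⟩ : W) : V) = ((A' (f' ⟨m', ⟨i + 1, hi1⟩⟩) : W) : V)
        from rfl, hAc' m' i hi hi1]
  · -- Gram
    rintro ⟨mx, ix⟩ ⟨my, iy⟩
    induction mx using Fin.cases with
    | zero =>
      induction my using Fin.cases with
      | zero =>
        show ℓ (e ix) (e iy) = _
        rw [hg ix iy]
        simp only [Fin.cons_zero]
        congr 1
        simp [eq_iff_iff]
      | succ my' =>
        show ℓ (e ix) ((f' ⟨my', iy⟩ : W) : V) = _
        rw [(f' ⟨my', iy⟩).2 ix, if_neg]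
        rintro ⟨h1, -⟩
        exact (Fin.succ_ne_zero my') h1.symm
    | succ mx' =>
      induction my using Fin.cases with
      | zero =>
        show ℓ ((f' ⟨mx', ix⟩ : W) : V) (e iy) = _
        rw [h.lherm, (f' ⟨mx', ix⟩).2 iy, map_zero, if_neg]
        rintro ⟨h1, -⟩
        exact (Fin.succ_ne_zero mx') h1
      | succ my' =>
        show ℓ' (f' ⟨mx', ix⟩) (f' ⟨my', iy⟩) = _
        rw [hg' ⟨mx', ix⟩ ⟨my', iy⟩]
        simp only [Fin.cons_succ]
        congr 1
        simp [eq_iff_iff, Fin.succ_inj]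
  · -- spanning
    rw [eq_top_iff']
    intro y
    have hy : y = pr y + (y - pr y) := by abel
    rw [hy]
    apply Submodule.add_mem
    · rw [hpr]
      simp only
      apply Submodule.sum_mem
      intro i _
      apply Submodule.smul_mem
      apply Submodule.subset_span
      exact ⟨⟨0, i⟩, rfl⟩
    · have hw : y - pr y ∈ W := hproj y
      have hmap : (⟨y - pr y, hw⟩ : W) ∈ Submodule.span ℂ (Set.range f') := by
        rw [hsp']; exact Submodule.mem_top
      have := Submodule.mem_map_of_mem (f := W.subtype) hmap
      rw [Submodule.map_span] at this
      refine Submodule.span_mono ?_ this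
      rintro v ⟨w, ⟨z, rfl⟩, rfl⟩
      exact ⟨⟨z.1.succ, z.2⟩, rfl⟩

end GP

lemma normalize_real (r : ℂ) (hr : r ≠ 0) (hc : conj r = r) :
    ∃ (c : ℝ) (ε₀ : ℂ), (ε₀ = 1 ∨ ε₀ = -1) ∧ (c : ℂ) * (c : ℂ) * r = ε₀ := by
  have hre : (r.re : ℂ) = r := Complex.conj_eq_iff_re.mp hc
  have hrre : r.re ≠ 0 := by
    intro h0
    apply hr
    rw [← hre, h0, Complex.ofReal_zero]
  refine ⟨(Real.sqrt |r.re|)⁻¹, if 0 < r.re then 1 else -1, by split <;> simp, ?_⟩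
  have key : (Real.sqrt |r.re|)⁻¹ * (Real.sqrt |r.re|)⁻¹ * r.re
      = if 0 < r.re then 1 else -1 := by
    rw [← mul_inv, Real.mul_self_sqrt (abs_nonneg _)]
    rcases lt_trichotomy r.re 0 with hlt | heq | hgt
    · rw [if_neg (by linarith), abs_of_neg hlt, inv_neg, neg_mul,
        inv_mul_cancel₀ hrre]
    · exact absurd heq hrre
    · rw [if_pos hgt, abs_of_pos hgt, inv_mul_cancel₀ hrre]
  calc (Complex.ofReal ((Real.sqrt |r.re|)⁻¹)) * (Complex.ofReal ((Real.sqrt |r.re|)⁻¹)) * r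
      = (((Real.sqrt |r.re|)⁻¹ * (Real.sqrt |r.re|)⁻¹ * r.re : ℝ) : ℂ) := by
        rw [← hre]; push_cast; ring_nf; rw [Complex.ofReal_re]
    _ = (((if 0 < r.re then 1 else -1 : ℝ)) : ℂ) := by rw [key]
    _ = if 0 < r.re then 1 else -1 := by split <;> norm_num

namespace GP
variable {ℓ : V → V → ℂ} {A : V → V} (h : GP ℓ A)
include h

lemma l_aau (u w : V) : ℓ (A u) (A (A w)) = 0 := by
  rw [h.asa u (A (A w)), h.a3, h.l0l]

lemma l_aua (u w : V) : ℓ (A (A u)) (A w) = 0 := by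
  rw [h.lherm (A w) (A (A u)), h.l_aau w u, map_zero]

lemma l_a2l (u w : V) : ℓ (A (A u)) w = ℓ (A w) (A u) := h.asa (A u) w

end GP

/-- A single normalized block of size `t`. -/
def BlockPkg (ℓ : V → V → ℂ) (A : V → V) (t : ℕ) : Prop :=
  ∃ (e : Fin t → V) (ε₀ : ℂ), (ε₀ = 1 ∨ ε₀ = -1) ∧
    (∀ h0 : 0 < t, A (e ⟨0, h0⟩) = 0) ∧
    (∀ (i : ℕ) (hi : i < t) (hi1 : i + 1 < t), A (e ⟨i + 1, hi1⟩) = e ⟨i, hi⟩) ∧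
    (∀ i j : Fin t, ℓ (e i) (e j) = if (i : ℕ) + (j : ℕ) + 1 = t then ε₀ else 0)

namespace GP
variable {ℓ : V → V → ℂ} {A : V → V} (h : GP ℓ A)
include h

lemma block1 (hA : ∀ v : V, A v = 0) (hnt : ∃ v : V, v ≠ 0) : BlockPkg ℓ A 1 := by
  have hex : ∃ v : V, ℓ v v ≠ 0 := by
    by_contra hcon
    push_neg at hcon
    obtain ⟨v₀, hv₀⟩ := hnt
    apply hv₀
    apply h.lnd
    intro y
    have ha := hcon (v₀ + y)
    simp only [h.ladd, h.laddr, hcon] at ha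
    have hI := hcon (v₀ + Complex.I • y)
    simp only [h.ladd, h.laddr, h.lsmul, h.lsmulr, hcon, Complex.conj_I] at hI
    have hI2 : Complex.I * Complex.I = -1 := Complex.I_mul_I
    linear_combination (Complex.I / 2) * hI + ((ℓ v₀ y - ℓ y v₀) / 2) * hI2 + (1 / 2) * ha
  obtain ⟨v, hv⟩ := hex
  have hcc : conj (ℓ v v) = ℓ v v := (h.lherm v v).symm
  obtain ⟨c, ε₀, hε₀, hnorm⟩ := normalize_real (ℓ v v) hv hcc
  refine ⟨fun _ => (c : ℂ) • v, ε₀, hε₀, fun _ => hA _, fun i hi hi1 => by omega, ?_⟩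
  intro i j
  rw [h.lsmul, h.lsmulr, Complex.conj_ofReal, if_pos (by omega)]
  linear_combination hnorm

lemma block2 (hA2 : ∀ v : V, A (A v) = 0) (hA1 : ∃ v : V, A v ≠ 0) : BlockPkg ℓ A 2 := by
  have hex : ∃ v : V, ℓ (A v) v ≠ 0 := by
    by_contra hcon
    push_neg at hcon
    obtain ⟨v₀, hv₀⟩ := hA1
    apply hv₀
    apply h.lnd
    intro y
    have h1 := hcon (v₀ + y)
    simp only [h.aadd, h.ladd, h.laddr, hcon, h.asa y v₀] at h1
    linear_combination h1 / 2
  obtain ⟨v, hv⟩ := hex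
  obtain ⟨d, hd⟩ := Complex.isAlgClosed.exists_pow_nat_eq (ℓ (A v) v) (n := 2) (by norm_num)
  have hdne : d ≠ 0 := by
    intro h0
    rw [h0] at hd
    apply hv
    rw [← hd]
    norm_num
  obtain ⟨v₁, hv₁⟩ : ∃ v₁ : V, v₁ = (conj d)⁻¹ • v := ⟨_, rfl⟩
  have hAv₁ : A v₁ = d⁻¹ • A v := by
    rw [hv₁, h.asmul, map_inv₀, Complex.conj_conj]
  have ht1 : ℓ (A v₁) v₁ = 1 := by
    rw [hAv₁, hv₁, h.lsmul, h.lsmulr, map_inv₀, Complex.conj_conj, ← hd]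
    field_simp
    try ring
  have hAvAv : ℓ (A v₁) (A v₁) = 0 := by
    rw [h.asa v₁ (A v₁), hA2, h.l0l]
  obtain ⟨β, hβ⟩ : ∃ β : ℂ, β = -(ℓ v₁ v₁) / 2 := ⟨_, rfl⟩
  have hs₀ : conj (ℓ v₁ v₁) = ℓ v₁ v₁ := (h.lherm v₁ v₁).symm
  have hβc : conj β = β := by
    rw [hβ, map_div₀, map_neg, hs₀, map_ofNat]
  obtain ⟨v₂, hv₂⟩ : ∃ v₂ : V, v₂ = v₁ + β • A v₁ := ⟨_, rfl⟩
  have hAv₂ : A v₂ = A v₁ := by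
    rw [hv₂, h.aadd, h.asmul, hA2, smul_zero, add_zero]
  have hAAv₂ : A (A v₂) = 0 := by rw [hAv₂]; exact hA2 v₁
  have g01 : ℓ (A v₂) v₂ = 1 := by
    rw [hAv₂, hv₂]
    simp only [h.laddr, h.lsmulr]
    rw [ht1, hAvAv]
    ring
  have g00 : ℓ (A v₂) (A v₂) = 0 := by
    rw [h.asa v₂ (A v₂), hAAv₂, h.l0l]
  have g10 : ℓ v₂ (A v₂) = 1 := by
    rw [h.lherm (A v₂) v₂, g01, map_one]
  have g11 : ℓ v₂ v₂ = 0 := by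
    rw [hv₂]
    simp only [h.ladd, h.laddr, h.lsmul, h.lsmulr]
    rw [hAvAv, ht1, h.lherm (A v₁) v₁, ht1, map_one, hβc, hβ]
    ring
  refine ⟨fun i => if (i : ℕ) = 0 then A v₂ else v₂, 1, Or.inl rfl, ?_, ?_, ?_⟩
  · intro h0
    simp only [if_pos rfl]
    exact hAAv₂
  · intro i hi hi1
    have hi0 : i = 0 := by omega
    subst hi0
    norm_num
  · intro i j
    obtain ⟨iv, hiv⟩ := i
    obtain ⟨jv, hjv⟩ := j
    interval_cases iv <;> interval_cases jv <;> norm_num [g00, g01, g10, g11]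

end GP

namespace GP
variable {ℓ : V → V → ℂ} {A : V → V} (h : GP ℓ A)
include h

lemma block3 (hA2 : ∃ v : V, A (A v) ≠ 0) : BlockPkg ℓ A 3 := by
  have hex : ∃ v : V, ℓ (A v) (A v) ≠ 0 := by
    by_contra hcon
    push_neg at hcon
    obtain ⟨v₀, hv₀⟩ := hA2
    apply hv₀
    apply h.lnd
    intro y
    -- `ℓ (A (A v₀)) y = ℓ (A y) (A v₀)`
    rw [h.l_a2l v₀ y]
    have ha := hcon (y + v₀)
    simp only [h.aadd, h.ladd, h.laddr, hcon] at ha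
    have hI := hcon (y + Complex.I • v₀)
    simp only [h.aadd, h.asmul, h.ladd, h.laddr, h.lsmul, h.lsmulr, hcon,
      map_neg, Complex.conj_I, neg_neg] at hI
    have hI2 : Complex.I * Complex.I = -1 := Complex.I_mul_I
    linear_combination (-Complex.I / 2) * hI
      + ((ℓ (A y) (A v₀) - ℓ (A v₀) (A y)) / 2) * hI2 + (1 / 2) * ha
  obtain ⟨v, hv⟩ := hex
  have hcc : conj (ℓ (A v) (A v)) = ℓ (A v) (A v) := (h.lherm (A v) (A v)).symm
  obtain ⟨c, ε₀, hε₀, hnorm⟩ := normalize_real (ℓ (A v) (A v)) hv hcc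
  have hε₀c : conj ε₀ = ε₀ := by rcases hε₀ with h' | h' <;> rw [h'] <;> simp
  have hε₀sq : ε₀ * ε₀ = 1 := by rcases hε₀ with h' | h' <;> rw [h'] <;> ring
  obtain ⟨v₁, hv₁⟩ : ∃ v₁ : V, v₁ = (c : ℂ) • v := ⟨_, rfl⟩
  have hAv₁ : A v₁ = (c : ℂ) • A v := by
    rw [hv₁, h.asmul, Complex.conj_ofReal]
  have hBB : ℓ (A v₁) (A v₁) = ε₀ := by
    rw [hAv₁, h.lsmul, h.lsmulr, Complex.conj_ofReal]
    linear_combination hnorm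
  -- step α
  obtain ⟨α, hα⟩ : ∃ α : ℂ, α = -(conj (ℓ (A v₁) v₁)) * ε₀ / 2 := ⟨_, rfl⟩
  have hαc : conj α = -(ℓ (A v₁) v₁) * ε₀ / 2 := by
    rw [hα, map_div₀, map_mul, map_neg, Complex.conj_conj, hε₀c, map_ofNat]
  obtain ⟨v₂, hv₂⟩ : ∃ v₂ : V, v₂ = v₁ + α • A v₁ := ⟨_, rfl⟩
  have hAv₂ : A v₂ = A v₁ + conj α • A (A v₁) := by
    rw [hv₂, h.aadd, h.asmul]
  have hA2v₂ : A (A v₂) = A (A v₁) := by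
    rw [hAv₂, h.aadd, h.asmul, h.a3, smul_zero, add_zero]
  have h2a : ℓ (A v₂) (A v₂) = ε₀ := by
    rw [hAv₂]
    simp only [h.ladd, h.laddr, h.lsmul, h.lsmulr]
    rw [hBB, h.l_aau v₁ v₁, h.l_aua v₁ v₁, h.l_aau (A v₁) v₁]
    ring
  have ht₂ : ℓ (A v₂) v₂ = 0 := by
    rw [hAv₂, hv₂]
    simp only [h.ladd, h.laddr, h.lsmul, h.lsmulr]
    rw [hBB, h.l_aua v₁ v₁, h.l_a2l v₁ v₁, hBB, hαc]
    ring_nf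
    linear_combination (-(ℓ (A v₁) v₁)) * hε₀sq
  -- step β
  obtain ⟨β, hβ⟩ : ∃ β : ℂ, β = -(ℓ v₂ v₂) * ε₀ / 2 := ⟨_, rfl⟩
  have hs₂ : conj (ℓ v₂ v₂) = ℓ v₂ v₂ := (h.lherm v₂ v₂).symm
  have hβc : conj β = β := by
    rw [hβ, map_div₀, map_mul, map_neg, hs₂, hε₀c, map_ofNat]
  obtain ⟨v₃, hv₃⟩ : ∃ v₃ : V, v₃ = v₂ + β • A (A v₂) := ⟨_, rfl⟩
  have hAv₃ : A v₃ = A v₂ := by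
    rw [hv₃, h.aadd, h.asmul, h.a3, smul_zero, add_zero]
  have hA2v₃ : A (A v₃) = A (A v₂) := by rw [hAv₃]
  -- Gram entries
  have P00 : ℓ (A (A v₃)) (A (A v₃)) = 0 := h.l_aau (A v₃) v₃
  have P01 : ℓ (A (A v₃)) (A v₃) = 0 := h.l_aua v₃ v₃
  have P10 : ℓ (A v₃) (A (A v₃)) = 0 := h.l_aau v₃ v₃
  have P11 : ℓ (A v₃) (A v₃) = ε₀ := by rw [hAv₃]; exact h2a
  have P02 : ℓ (A (A v₃)) v₃ = ε₀ := by rw [h.l_a2l v₃ v₃]; exact P11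
  have P12 : ℓ (A v₃) v₃ = 0 := by
    rw [hAv₃, hv₃]
    simp only [h.laddr, h.lsmulr]
    rw [ht₂, h.l_aau v₂ v₂]
    ring
  have P20 : ℓ v₃ (A (A v₃)) = ε₀ := by
    rw [h.lherm (A (A v₃)) v₃, P02, hε₀c]
  have P21 : ℓ v₃ (A v₃) = 0 := by
    rw [h.lherm (A v₃) v₃, P12, map_zero]
  have P22 : ℓ v₃ v₃ = 0 := by
    rw [hv₃]
    simp only [h.ladd, h.laddr, h.lsmul, h.lsmulr]
    rw [h.l_a2l v₂ v₂, h2a, h.lherm (A (A v₂)) v₂, h.l_a2l v₂ v₂, h2a, hε₀c,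
      h.l_aau (A v₂) v₂, hβc, hβ]
    ring_nf
    linear_combination (-(ℓ v₂ v₂)) * hε₀sq
  refine ⟨fun i => if (i : ℕ) = 0 then A (A v₃) else if (i : ℕ) = 1 then A v₃ else v₃,
    ε₀, hε₀, ?_, ?_, ?_⟩
  · intro h0
    simp only [if_pos rfl]
    exact h.a3 v₃
  · intro i hi hi1
    have : i = 0 ∨ i = 1 := by omega
    rcases this with rfl | rfl <;> norm_num
  · intro i j
    obtain ⟨iv, hiv⟩ := i
    obtain ⟨jv, hjv⟩ := j
    interval_cases iv <;> interval_cases jv <;>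
      norm_num [P00, P01, P02, P10, P11, P12, P20, P21, P22]

end GP

lemma concl_trivial {ℓ : V → V → ℂ} {A : V → V} (htriv : ∀ v : V, v = 0) :
    Concl ℓ A :=
  ⟨0, Fin.elim0, fun m => m.elim0, Fin.elim0, fun x => x.1.elim0,
   fun m => m.elim0, fun m => m.elim0, fun m => m.elim0, fun m => m.elim0,
   fun x => x.1.elim0,
   by rw [Submodule.eq_top_iff']; intro x; rw [htriv x]; exact Submodule.zero_mem _⟩

lemma aux : ∀ (n : ℕ) (V : Type u) [AddCommGroup V] [Module ℂ V]
    [FiniteDimensional ℂ V] (ℓ : V → V → ℂ) (A : V → V),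
    GP ℓ A → finrank ℂ V ≤ n → Concl ℓ A := by
  intro n
  induction n with
  | zero =>
    intro V _ _ _ ℓ A h hr
    have hzero : finrank ℂ V = 0 := Nat.le_zero.mp hr
    have hsub : Subsingleton V := Module.finrank_zero_iff.mp hzero
    exact concl_trivial (fun v => Subsingleton.elim v 0)
  | succ n IHn =>
    intro V _ _ _ ℓ A h hr
    by_cases h2 : ∃ v : V, A (A v) ≠ 0
    · obtain ⟨e, ε₀, hε₀, hc0, hcs, hg⟩ := h.block3 h2
      exact h.step (fun W ℓ' A' h' hw => IHn W ℓ' A' h' hw) hr 3 (by norm_num)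
        e ε₀ hε₀ hc0 hcs hg
    · push_neg at h2
      by_cases h1 : ∃ v : V, A v ≠ 0
      · obtain ⟨e, ε₀, hε₀, hc0, hcs, hg⟩ := h.block2 h2 h1
        exact h.step (fun W ℓ' A' h' hw => IHn W ℓ' A' h' hw) hr 2 (by norm_num)
          e ε₀ hε₀ hc0 hcs hg
      · push_neg at h1
        by_cases h0 : ∃ v : V, v ≠ 0
        · obtain ⟨e, ε₀, hε₀, hc0, hcs, hg⟩ := h.block1 h1 h0
          exact h.step (fun W ℓ' A' h' hw => IHn W ℓ' A' h' hw) hr 1 (by norm_num)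
            e ε₀ hε₀ hc0 hcs hg
        · push_neg at h0
          exact concl_trivial h0



/-- Normal form for nilpotent regular symbols: if `A` is anti-linear, `ℓ`-self-adjoint,
`A³ = 0` and `A ≠ 0`, then there is a basis of `V`, block sizes `k₁, …, k_s ∈ {1,2,3}` with
some `k_m > 1`, and signs `ε_m ∈ {±1}` such that in this basis `A = J_{k₁} ⊕ ⋯ ⊕ J_{k_s}`
(nilpotent Jordan blocks composed with coordinate conjugation, i.e. `A b_{m,0} = 0` and
`A b_{m,i+1} = b_{m,i}`) and `ℓ = ε₁ P_{k₁} ⊕ ⋯ ⊕ ε_s P_{k_s}` (anti-diagonal blocks: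
`ℓ(b_{m,i}, b_{m',j}) = ε_m` iff `m = m'` and `i + j + 1 = k_m`, and `0` otherwise). -/
theorem stmt9 (V : Type*) [AddCommGroup V] [Module ℂ V] [FiniteDimensional ℂ V]
    (ℓ : V → V → ℂ)
    (hladd : ∀ x₁ x₂ y : V, ℓ (x₁ + x₂) y = ℓ x₁ y + ℓ x₂ y)
    (hlsmul : ∀ (c : ℂ) (x y : V), ℓ (c • x) y = c * ℓ x y)
    (hlherm : ∀ x y : V, ℓ y x = starRingEnd ℂ (ℓ x y))
    (hlnd : ∀ x : V, (∀ y : V, ℓ x y = 0) → x = 0)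
    (A : V → V)
    (hAadd : ∀ x y : V, A (x + y) = A x + A y)
    (hAsmul : ∀ (c : ℂ) (x : V), A (c • x) = starRingEnd ℂ c • A x)
    (hAsa : ∀ x y : V, ℓ (A x) y = ℓ (A y) x)
    (hA3 : ∀ v : V, A (A (A v)) = 0)
    (hAne : ∃ v : V, A v ≠ 0) :
    ∃ (s : ℕ) (k : Fin s → ℕ) (hpos : ∀ m, 0 < k m) (ε : Fin s → ℂ)
      (b : Basis ((m : Fin s) × Fin (k m)) ℂ V),
      (∀ m, k m = 1 ∨ k m = 2 ∨ k m = 3) ∧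
      (∃ m, 1 < k m) ∧
      (∀ m, ε m = 1 ∨ ε m = -1) ∧
      (∀ m : Fin s, A (b ⟨m, ⟨0, hpos m⟩⟩) = 0) ∧
      (∀ (m : Fin s) (i : Fin (k m)) (h : (i : ℕ) + 1 < k m),
        A (b ⟨m, ⟨(i : ℕ) + 1, h⟩⟩) = b ⟨m, i⟩) ∧
      (∀ x y : (m : Fin s) × Fin (k m),
        ℓ (b x) (b y) =
          if x.1 = y.1 ∧ (x.2 : ℕ) + (y.2 : ℕ) + 1 = k x.1 then ε x.1 else 0) := by
  classical
  have h : GP ℓ A := ⟨hladd, hlsmul, hlherm, hlnd, hAadd, hAsmul, hAsa, hA3⟩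
  obtain ⟨s, k, hpos, ε, f, hk, hε, hA0, hAc, hg, hsp⟩ :=
    aux (finrank ℂ V) V ℓ A h le_rfl
  have hli : LinearIndependent ℂ f := h.gram_li ε hε f hg
  let b : Basis ((m : Fin s) × Fin (k m)) ℂ V := Basis.mk hli (by rw [hsp])
  have hb : ⇑b = f := Basis.coe_mk _ _
  refine ⟨s, k, hpos, ε, b, hk, ?_, hε, ?_, ?_, ?_⟩
  · -- some block has size > 1
    by_contra hno
    push_neg at hno
    have hone : ∀ m, A (b ⟨m, ⟨0, hpos m⟩⟩) = 0 := by
      intro m; rw [hb]; exact hA0 m (hpos m)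
    obtain ⟨v, hAv⟩ := hAne
    apply hAv
    have hv := Basis.sum_repr b v
    calc A v = A (∑ i, b.repr v i • b i) := by rw [hv]
      _ = ∑ i, A (b.repr v i • b i) := h.asum _ _
      _ = 0 := by
          apply Finset.sum_eq_zero
          intro i _
          rw [h.asmul]
          have hi : i = ⟨i.1, ⟨0, hpos i.1⟩⟩ := by
            obtain ⟨mi, ii⟩ := i
            have h1 := hno mi
            have h2 := ii.2
            congr 1
            exact Fin.ext (by omega)
          rw [hi, hone i.1, smul_zero]
  · intro m; rw [hb]; exact hA0 m (hpos m)
  · intro m i hlt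
    rw [hb]
    exact hAc m (i : ℕ) i.2 hlt
  · intro x y; rw [hb]; exact hg x y
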